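/- arXiv:1004.3043 — 2 statements merged into one kernel-verified Lean document; each statement's English description precedes it below -/
import Mathlib

section
/- Let c > 0 and let x, g : [0,T] → ℝ be right-continuous functions with left limits such that g(0) = 0 and for all 0 ≤ s ≤ t ≤ T we have x(t) ≤ x(s) - c∫_s^t x(u) du + g(t) - g(s). Then for all t ∈ [0,T], x(t) ≤ e^{-ct}(x(0) + g(t)) + c∫_0^t e^{-c(t-u)}(g(t) - g(u)) du. -/
/-!
Put `φ s = x s + c * ∫ u in 0..s, x u`; the hypothesis says precisely that `φ - g` is antitone.
The primitive of `x` is absolutely continuous, so differentiating `s ↦ e^{-c(t-s)} ∫_0^s x`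
almost everywhere gives the variation-of-constants formula
`x t = φ t - c ∫_0^t e^{-c(t-u)} φ u du`.
Splitting `φ = (φ - g) + g`, bounding `φ - g` on `[0, t]` below by its value at `t`, and using
`c ∫_0^t e^{-c(t-u)} du = 1 - e^{-ct}` yields the claim.
-/

open MeasureTheory Set Real

theorem hasDerivAt_exp_neg_mul_sub (b c u : ℝ) :
    HasDerivAt (fun s ↦ exp (-c * (b - s))) (c * exp (-c * (b - u))) u := by
  convert (((hasDerivAt_id' u).const_sub b).const_mul (-c)).exp using 1
  ring

theorem mul_integral_exp_neg_mul_sub {a b : ℝ} (c : ℝ) :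
    c * ∫ u in a..b, exp (-c * (b - u)) = 1 - exp (-c * (b - a)) := by
  rw [← intervalIntegral.integral_const_mul, intervalIntegral.integral_eq_sub_of_hasDerivAt
    (fun u _ ↦ hasDerivAt_exp_neg_mul_sub b c u)
    (Continuous.intervalIntegrable (by fun_prop) a b)]
  simp

theorem integral_exp_neg_mul_sub_mul_add_integral {x : ℝ → ℝ} {a b : ℝ} (c : ℝ)
    (hx : IntervalIntegrable x volume a b) :
    ∫ u in a..b, exp (-c * (b - u)) * (x u + c * ∫ v in a..u, x v) = ∫ v in a..b, x v := by
  set F : ℝ → ℝ := fun s ↦ ∫ v in a..s, x v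
  have hac : AbsolutelyContinuousOnInterval (fun s ↦ exp (-c * (b - s)) * F s) a b :=
    (ContDiffOn.absolutelyContinuousOnInterval (by fun_prop)).fun_mul
      (hx.absolutelyContinuousOnInterval_intervalIntegral left_mem_uIcc)
  have hderiv : ∀ᵐ u, u ∈ uIoc a b →
      deriv (fun s ↦ exp (-c * (b - s)) * F s) u = exp (-c * (b - u)) * (x u + c * F u) := by
    filter_upwards [hx.ae_hasDerivAt_integral] with u hF hu
    rw [((hasDerivAt_exp_neg_mul_sub b c u).fun_mul
      (hF (uIoc_subset_uIcc hu) a left_mem_uIcc)).deriv]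
    ring
  rw [← intervalIntegral.integral_congr_ae hderiv, hac.integral_deriv_eq_sub]
  simp [F]

theorem antitoneOn_add_mul_integral_sub {x g : ℝ → ℝ} {a b c : ℝ}
    (hx : IntervalIntegrable x volume a b)
    (hineq : ∀ s t, a ≤ s → s ≤ t → t ≤ b →
      x t ≤ x s - c * (∫ u in s..t, x u) + g t - g s) :
    AntitoneOn (fun s ↦ x s + c * (∫ u in a..s, x u) - g s) (Icc a b) := by
  intro s hs t ht hst
  have hsub : ∀ r ∈ Icc a b, IntervalIntegrable x volume a r := fun r hr ↦
    hx.mono_set (uIcc_subset_uIcc left_mem_uIcc (uIcc_of_le (hr.1.trans hr.2) ▸ hr))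
  have hsplit : ∫ u in a..t, x u = (∫ u in a..s, x u) + ∫ u in s..t, x u :=
    (intervalIntegral.integral_add_adjacent_intervals (hsub s hs)
      ((hsub s hs).symm.trans (hsub t ht))).symm
  have := hineq s t hs.1 hst ht.2
  simp only [hsplit]
  linarith

theorem sub_mul_integral_exp_neg_mul_sub_le {h g : ℝ → ℝ} {a b c : ℝ} (hc : 0 ≤ c)
    (hab : a ≤ b) (hh : AntitoneOn h (Icc a b)) (hg : IntervalIntegrable g volume a b) :
    h b + g b - c * ∫ u in a..b, exp (-c * (b - u)) * (h u + g u)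
      ≤ exp (-c * (b - a)) * (h a + g b)
        + c * ∫ u in a..b, exp (-c * (b - u)) * (g b - g u) := by
  set K : ℝ → ℝ := fun u ↦ exp (-c * (b - u))
  have hKcont : ContinuousOn K (uIcc a b) := by fun_prop
  have hK : IntervalIntegrable K volume a b := hKcont.intervalIntegrable
  have hKh : IntervalIntegrable (fun u ↦ K u * h u) volume a b :=
    (AntitoneOn.intervalIntegrable (uIcc_of_le hab ▸ hh)).continuousOn_mul hKcont
  have hKg : IntervalIntegrable (fun u ↦ K u * g u) volume a b := hg.continuousOn_mul hKcont
  have hmass : ∀ y, c * ((∫ u in a..b, K u) * y) = (1 - exp (-c * (b - a))) * y := fun y ↦ by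
    rw [← mul_assoc, mul_integral_exp_neg_mul_sub]
  have hlow : (∫ u in a..b, K u) * h b ≤ ∫ u in a..b, K u * h u := by
    rw [← intervalIntegral.integral_mul_const]
    refine intervalIntegral.integral_mono_on hab (hK.mul_const _) hKh fun u hu ↦ ?_
    exact mul_le_mul_of_nonneg_left (hh hu ⟨hab, le_rfl⟩ hu.2) (exp_pos _).le
  have hdecay : exp (-c * (b - a)) * h b ≤ exp (-c * (b - a)) * h a :=
    mul_le_mul_of_nonneg_left (hh ⟨le_rfl, hab⟩ ⟨hab, le_rfl⟩ hab) (exp_pos _).le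
  have hsplit₁ : ∫ u in a..b, K u * (h u + g u)
      = (∫ u in a..b, K u * h u) + ∫ u in a..b, K u * g u := by
    simp_rw [mul_add]
    exact intervalIntegral.integral_add hKh hKg
  have hsplit₂ : ∫ u in a..b, K u * (g b - g u)
      = (∫ u in a..b, K u) * g b - ∫ u in a..b, K u * g u := by
    simp_rw [mul_sub]
    rw [intervalIntegral.integral_sub (hK.mul_const _) hKg, intervalIntegral.integral_mul_const]
  rw [hsplit₁, hsplit₂]
  linarith [hmass (h b) ▸ mul_le_mul_of_nonneg_left hlow hc, hmass (g b)]

theorem gronwall_type_comparison_general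
    (T c : ℝ) (hc : 0 < c) (x g : ℝ → ℝ)
    (hx : IntervalIntegrable x volume 0 T)
    (hg : IntervalIntegrable g volume 0 T)
    (hg0 : g 0 = 0)
    (hineq : ∀ s t : ℝ, 0 ≤ s → s ≤ t → t ≤ T →
      x t ≤ x s - c * (∫ u in s..t, x u) + g t - g s) :
    ∀ t ∈ Set.Icc (0:ℝ) T,
      x t ≤ Real.exp (-c * t) * (x 0 + g t)
            + c * ∫ u in (0:ℝ)..t, Real.exp (-c * (t - u)) * (g t - g u) := by
  rintro t ⟨ht0, htT⟩
  have hsub : uIcc 0 t ⊆ uIcc 0 T :=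
    uIcc_subset_uIcc_left (by rw [uIcc_of_le (ht0.trans htT)]; exact ⟨ht0, htT⟩)
  set h : ℝ → ℝ := fun s ↦ x s + c * (∫ u in (0:ℝ)..s, x u) - g s
  have hanti : AntitoneOn h (Icc 0 t) :=
    (antitoneOn_add_mul_integral_sub hx hineq).mono (Icc_subset_Icc_right htT)
  have hh0 : h 0 = x 0 := by simp [h, hg0]
  have hresolvent := integral_exp_neg_mul_sub_mul_add_integral c (hx.mono_set hsub)
  have key := sub_mul_integral_exp_neg_mul_sub_le hc.le ht0 hanti (hg.mono_set hsub)
  simpa only [h, sub_add_cancel, sub_zero, hresolvent, hh0, add_sub_cancel_right] using key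

theorem gronwall_type_comparison
    (T c : ℝ) (hT : 0 ≤ T) (hc : 0 < c) (x g : ℝ → ℝ)
    (hx : IntervalIntegrable x volume 0 T)
    (hg : IntervalIntegrable g volume 0 T)
    (hg0 : g 0 = 0)
    (hineq : ∀ s t : ℝ, 0 ≤ s → s ≤ t → t ≤ T →
      x t ≤ x s - c * (∫ u in s..t, x u) + g t - g s) :
    ∀ t ∈ Set.Icc (0:ℝ) T,
      x t ≤ Real.exp (-c * t) * (x 0 + g t)
            + c * ∫ u in (0:ℝ)..t, Real.exp (-c * (t - u)) * (g t - g u) :=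
  gronwall_type_comparison_general T c hc x g hx hg hg0 hineq
end

section
/- Let ρ(s, x, y) denote the transition density of the 2-dimensional Gaussian process (q_t, p_t) given by p_t = p_0 + σ W_t / μ, q_t = q_0 + ∫_0^t p_s ds (integrated Brownian motion), with σ, μ > 0 fixed. Then for Δ = [-δ²/2, δ²/2] × [-δ/2, δ/2] and q_0 ≠ 0, there exists A = A(T, q_0, σ, μ) such that ∫_Δ ∫_0^T ρ(s, (q_0, 0), y) ds dy ≤ A δ³; i.e., the expected occupation time of Δ up to time T is at most A δ³. -/
open MeasureTheory Set Real

/-- Transition density of the Kolmogorov process `(q_t, p_t)` with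
`p_t = p₀ + σ W_t / μ` and `q_t = q₀ + ∫_0^t p_s ds`, started at `x = (q₀, p₀)`,
evaluated at time `s > 0` and point `y = (y₁, y₂)`.  The covariance matrix is
`(σ²/μ²) * [[s³/3, s²/2], [s²/2, s]]`, whose determinant is `(σ²/μ²)² s⁴ / 12`. -/
noncomputable def kolmogorovDensity (σ μ : ℝ) (s : ℝ) (x y : ℝ × ℝ) : ℝ :=
  let a := σ ^ 2 / μ ^ 2
  let v₁ := y.1 - (x.1 + x.2 * s)
  let v₂ := y.2 - x.2
  (1 / (2 * Real.pi * Real.sqrt (a ^ 2 * s ^ 4 / 12))) *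
    Real.exp (-(1 / (2 * a)) *
      ((12 / s ^ 4) * (s * v₁ ^ 2 - s ^ 2 * v₁ * v₂ + (s ^ 3 / 3) * v₂ ^ 2)))

/-! Write `v = y₁ - q₀` and `a = σ²/μ²`. Completing the square in the exponent gives
`ρ(s, (q₀, 0), y) ≤ c s⁻² exp (-3v²/(2as³))`, and `exp (-t) ≤ t^(-2/5)` turns this into
`ρ ≤ C s^(-4/5) |v|^(-4/5)`, which is integrable in `s` at `0`; hence the occupation density
`∫_0^T ρ ds` is at most `C' |v|^(-4/5)`. Because `q₀ ≠ 0`, this is bounded for `y₁` near `0`, so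
its integral over `y₁ ∈ [-δ²/2, δ²/2]` is `O(δ²)` (for `δ²` not small, local integrability of
`|v|^(-4/5)` suffices), and the `y₂`-interval contributes a factor `δ`. -/

lemma rpow_le_exp_of_le_one {t r : ℝ} (ht : 0 ≤ t) (hr₀ : 0 ≤ r) (hr₁ : r ≤ 1) :
    t ^ r ≤ exp t := by
  rcases le_total t 1 with h | h
  · exact (rpow_le_one ht h hr₀).trans (one_le_exp ht)
  · calc t ^ r ≤ t ^ (1 : ℝ) := rpow_le_rpow_of_exponent_le h hr₁
      _ = t := rpow_one t
      _ ≤ exp t := by linarith [add_one_le_exp t]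

lemma exp_neg_le_rpow_neg {t r : ℝ} (ht : 0 < t) (hr₀ : 0 ≤ r) (hr₁ : r ≤ 1) :
    exp (-t) ≤ t ^ (-r) := by
  rw [exp_neg, rpow_neg ht.le]
  exact inv_anti₀ (rpow_pos_of_pos ht r) (rpow_le_exp_of_le_one ht.le hr₀ hr₁)

lemma kolmogorovDensity_nonneg (σ μ s : ℝ) (x y : ℝ × ℝ) : 0 ≤ kolmogorovDensity σ μ s x y := by
  unfold kolmogorovDensity
  positivity

lemma kolmogorov_quadratic_form_eq {s : ℝ} (hs : s ≠ 0) (v₁ v₂ : ℝ) :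
    (12 / s ^ 4) * (s * v₁ ^ 2 - s ^ 2 * v₁ * v₂ + (s ^ 3 / 3) * v₂ ^ 2) =
      (3 * v₁ ^ 2 + (3 * v₁ - 2 * s * v₂) ^ 2) / s ^ 3 := by
  field_simp
  ring

lemma kolmogorovDensity_le {σ μ s : ℝ} (hσ : σ ≠ 0) (hμ : μ ≠ 0) (hs : 0 < s) (q₀ : ℝ)
    (y : ℝ × ℝ) :
    kolmogorovDensity σ μ s (q₀, 0) y ≤
      √12 / (2 * π * (σ ^ 2 / μ ^ 2) * s ^ 2) *
        exp (-(3 * (y.1 - q₀) ^ 2 / (2 * (σ ^ 2 / μ ^ 2) * s ^ 3))) := by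
  simp only [kolmogorovDensity, zero_mul, add_zero, sub_zero,
    kolmogorov_quadratic_form_eq hs.ne']
  set a := σ ^ 2 / μ ^ 2
  set v := y.1 - q₀
  have ha : 0 < a := by positivity
  have h_sqrt : √(a ^ 2 * s ^ 4 / 12) = a * s ^ 2 / √12 := by
    rw [sqrt_div' _ (by norm_num), sqrt_mul' _ (by positivity), sqrt_sq ha.le,
      show s ^ 4 = (s ^ 2) ^ 2 by ring, sqrt_sq (by positivity)]
  have h_split : 1 / (2 * a) * ((3 * v ^ 2 + (3 * v - 2 * s * y.2) ^ 2) / s ^ 3) =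
      3 * v ^ 2 / (2 * a * s ^ 3) + (3 * v - 2 * s * y.2) ^ 2 / (2 * a * s ^ 3) := by
    ring
  have h_rest : 0 ≤ (3 * v - 2 * s * y.2) ^ 2 / (2 * a * s ^ 3) := by positivity
  rw [h_sqrt, show 1 / (2 * π * (a * s ^ 2 / √12)) = √12 / (2 * π * a * s ^ 2) by field_simp]
  gcongr
  linarith

lemma exists_kolmogorovDensity_le_rpow {σ μ : ℝ} (hσ : σ ≠ 0) (hμ : μ ≠ 0) (q₀ : ℝ) :
    ∃ C > 0, ∀ s > 0, ∀ y : ℝ × ℝ, y.1 ≠ q₀ →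
      kolmogorovDensity σ μ s (q₀, 0) y ≤
        C * s ^ (-(4 : ℝ) / 5) * |y.1 - q₀| ^ (-(4 : ℝ) / 5) := by
  set a := σ ^ 2 / μ ^ 2
  have ha : 0 < a := by positivity
  -- Any exponent in `(1/3, 1/2)` in place of `2/5` keeps both powers of `s` and `|v|` integrable.
  refine ⟨√12 / (2 * π * a) * (3 / (2 * a)) ^ (-(2 : ℝ) / 5), by positivity,
    fun s hs y hy => ?_⟩
  have hv : 0 < |y.1 - q₀| := abs_pos.mpr (sub_ne_zero.mpr hy)
  set t := 3 * (y.1 - q₀) ^ 2 / (2 * a * s ^ 3)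
  have ht : 0 < t := by positivity
  have h_t : t = 3 / (2 * a) * (|y.1 - q₀| ^ (2 : ℝ) * (s ^ (3 : ℝ))⁻¹) := by
    rw [rpow_two, sq_abs, rpow_ofNat]
    ring
  have h_pow : t ^ (-(2 : ℝ) / 5) =
      (3 / (2 * a)) ^ (-(2 : ℝ) / 5) *
        (|y.1 - q₀| ^ (-(4 : ℝ) / 5) * s ^ ((6 : ℝ) / 5)) := by
    rw [h_t, mul_rpow (by positivity) (by positivity), mul_rpow (by positivity) (by positivity),
      inv_rpow (by positivity), ← rpow_mul hv.le, ← rpow_mul hs.le, ← rpow_neg hs.le]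
    norm_num
  have h_s : s ^ ((6 : ℝ) / 5) / s ^ 2 = s ^ (-(4 : ℝ) / 5) := by
    rw [← rpow_ofNat, ← rpow_sub hs]
    norm_num
  calc kolmogorovDensity σ μ s (q₀, 0) y ≤ √12 / (2 * π * a * s ^ 2) * exp (-t) :=
        kolmogorovDensity_le hσ hμ hs q₀ y
    _ ≤ √12 / (2 * π * a * s ^ 2) * t ^ (-(2 : ℝ) / 5) := by
        gcongr
        rw [neg_div]
        exact exp_neg_le_rpow_neg ht (by norm_num) (by norm_num)
    _ = _ := by
        rw [h_pow, ← h_s]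
        field_simp

lemma exists_integral_kolmogorovDensity_le {σ μ T : ℝ} (hσ : σ ≠ 0) (hμ : μ ≠ 0) (hT : 0 < T)
    (q₀ : ℝ) :
    ∃ C > 0, ∀ y : ℝ × ℝ, y.1 ≠ q₀ →
      ∫ s in (0 : ℝ)..T, kolmogorovDensity σ μ s (q₀, 0) y ≤
        C * |y.1 - q₀| ^ (-(4 : ℝ) / 5) := by
  obtain ⟨K, hK, hρ⟩ := exists_kolmogorovDensity_le_rpow hσ hμ q₀
  refine ⟨5 * K * T ^ ((1 : ℝ) / 5), by positivity, fun y hy => ?_⟩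
  set c := |y.1 - q₀| ^ (-(4 : ℝ) / 5)
  have h_int : IntervalIntegrable (fun s : ℝ => K * s ^ (-(4 : ℝ) / 5) * c) volume 0 T :=
    ((intervalIntegral.intervalIntegrable_rpow' (by norm_num)).const_mul K).mul_const c
  calc ∫ s in (0 : ℝ)..T, kolmogorovDensity σ μ s (q₀, 0) y
      = ∫ s in Ioc 0 T, kolmogorovDensity σ μ s (q₀, 0) y :=
        intervalIntegral.integral_of_le hT.le
    _ ≤ ∫ s in Ioc 0 T, K * s ^ (-(4 : ℝ) / 5) * c :=
        integral_mono_of_nonneg (ae_of_all _ fun s => kolmogorovDensity_nonneg σ μ s _ y)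
          ((intervalIntegrable_iff_integrableOn_Ioc_of_le hT.le).mp h_int)
          (ae_restrict_of_forall_mem measurableSet_Ioc fun s hs => hρ s hs.1 y hy)
    _ = ∫ s in (0 : ℝ)..T, K * s ^ (-(4 : ℝ) / 5) * c :=
        (intervalIntegral.integral_of_le hT.le).symm
    _ = 5 * K * T ^ ((1 : ℝ) / 5) * c := by
        rw [intervalIntegral.integral_mul_const, intervalIntegral.integral_const_mul,
          integral_rpow (Or.inl (by norm_num)), show -(4 : ℝ) / 5 + 1 = 1 / 5 by norm_num,
          zero_rpow (by norm_num)]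
        ring

lemma intervalIntegrable_abs_rpow {r : ℝ} (hr : -1 < r) (a b : ℝ) :
    IntervalIntegrable (fun x ↦ |x| ^ r) volume a b := by
  have h_nonneg : ∀ c, 0 ≤ c → IntervalIntegrable (fun x ↦ |x| ^ r) volume 0 c := by
    intro c hc
    have h := intervalIntegral.intervalIntegrable_rpow' (a := 0) (b := c) hr
    rw [intervalIntegrable_iff, uIoc_of_le hc] at h ⊢
    exact h.congr_fun (fun x hx ↦ by rw [abs_of_pos hx.1]) measurableSet_Ioc
  have h_zero : ∀ c, IntervalIntegrable (fun x ↦ |x| ^ r) volume 0 c := by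
    intro c
    rcases le_total 0 c with hc | hc
    · exact h_nonneg c hc
    · rw [IntervalIntegrable.iff_comp_neg]
      simpa [abs_neg] using h_nonneg (-c) (by linarith)
  exact (h_zero a).symm.trans (h_zero b)

lemma integrableOn_Icc_abs_sub_rpow {r : ℝ} (hr : -1 < r) (c a b : ℝ) :
    IntegrableOn (fun x ↦ |x - c| ^ r) (Icc a b) := by
  have h := (intervalIntegrable_abs_rpow hr (a - c) (b - c)).comp_sub_right c
  simp only [sub_add_cancel] at h
  exact ((intervalIntegrable_iff').1 h).mono_set Icc_subset_uIcc

lemma exists_setIntegral_Icc_le_mul {f : ℝ → ℝ} (hf₀ : ∀ x, 0 ≤ f x)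
    (hf : IntegrableOn f (Icc (-1 / 2) (1 / 2))) {ε M : ℝ} (hε : 0 < ε) (hM₀ : 0 < M)
    (hM : ∀ x ∈ Icc (-ε) ε, f x ≤ M) :
    ∃ B > 0, ∀ h ∈ Ioc (0 : ℝ) 1, ∫ x in Icc (-h / 2) (h / 2), f x ≤ B * h := by
  set J := ∫ x in Icc (-1 / 2) (1 / 2), f x
  have hJ : 0 ≤ J := setIntegral_nonneg measurableSet_Icc fun x _ => hf₀ x
  refine ⟨M + J / (2 * ε), by positivity, fun h ⟨hh₀, hh₁⟩ => ?_⟩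
  have h_sub : Icc (-h / 2) (h / 2) ⊆ Icc (-1 / 2) (1 / 2) :=
    Icc_subset_Icc (by linarith) (by linarith)
  have hJ_le : J / (2 * ε) * 0 ≤ J / (2 * ε) * h := by gcongr
  rcases le_total h (2 * ε) with h_small | h_large
  · calc ∫ x in Icc (-h / 2) (h / 2), f x ≤ ∫ _ in Icc (-h / 2) (h / 2), M :=
          setIntegral_mono_on (hf.mono_set h_sub) (integrableOn_const measure_Icc_lt_top.ne)
            measurableSet_Icc fun x hx => hM x ⟨by linarith [hx.1], by linarith [hx.2]⟩
      _ = M * h := by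
          rw [setIntegral_const, Real.volume_real_Icc_of_le (by linarith), smul_eq_mul]
          ring
      _ ≤ (M + J / (2 * ε)) * h := by linarith
  · calc ∫ x in Icc (-h / 2) (h / 2), f x ≤ J :=
          setIntegral_mono_set hf (ae_of_all _ fun x => hf₀ x) h_sub.eventuallyLE
      _ ≤ J / (2 * ε) * h := by
          rw [div_mul_eq_mul_div, le_div_iff₀ (by positivity)]
          exact mul_le_mul_of_nonneg_left h_large hJ
      _ ≤ (M + J / (2 * ε)) * h := by nlinarith

lemma setIntegral_prod_le_of_ae_le_comp_fst {α β : Type*} [MeasurableSpace α]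
    [MeasurableSpace β] {μ : Measure α} {ν : Measure β} [SFinite μ] [SFinite ν]
    {F : α × β → ℝ} {g : α → ℝ} {s : Set α} {t : Set β} (hF : ∀ z, 0 ≤ F z)
    (hg : IntegrableOn g s μ) (ht : ν t ≠ ⊤) (hFg : ∀ᵐ x ∂μ, ∀ y, F (x, y) ≤ g x) :
    ∫ z in s ×ˢ t, F z ∂μ.prod ν ≤ (∫ x in s, g x ∂μ) * ν.real t := by
  have : IsFiniteMeasure (ν.restrict t) := isFiniteMeasure_restrict.mpr ht
  rw [← Measure.prod_restrict]
  calc ∫ z, F z ∂(μ.restrict s).prod (ν.restrict t)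
      ≤ ∫ z, g z.1 ∂(μ.restrict s).prod (ν.restrict t) :=
        integral_mono_of_nonneg (ae_of_all _ hF) (hg.comp_fst _)
          ((Measure.quasiMeasurePreserving_fst.ae (ae_restrict_of_ae hFg)).mono
            fun z hz => hz z.2)
    _ = (∫ x in s, g x ∂μ) * ν.real t := by
        rw [integral_fun_fst, measureReal_restrict_apply_univ, smul_eq_mul, mul_comm]

lemma rpow_abs_sub_le_of_abs_le {x c r : ℝ} (hc : c ≠ 0) (hr : r ≤ 0) (hx : |x| ≤ |c| / 2) :
    |x - c| ^ r ≤ (|c| / 2) ^ r := by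
  have h_far : |c| / 2 ≤ |x - c| := by
    have := abs_sub_abs_le_abs_sub c x
    rw [abs_sub_comm] at this
    linarith
  exact rpow_le_rpow_of_nonpos (by positivity) h_far hr

theorem occupation_time_upper_bound
    (T σ μ q₀ : ℝ) (hT : 0 < T) (hσ : 0 < σ) (hμ : 0 < μ) (hq₀ : q₀ ≠ 0) :
    ∃ A > (0:ℝ), ∀ δ ∈ Set.Ioo (0:ℝ) 1,
      (∫ y in (Set.Icc (-(δ ^ 2) / 2) (δ ^ 2 / 2)) ×ˢ (Set.Icc (-δ / 2) (δ / 2)),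
          ∫ s in (0:ℝ)..T, kolmogorovDensity σ μ s (q₀, 0) y)
        ≤ A * δ ^ 3 := by
  obtain ⟨C, hC, h_time⟩ := exists_integral_kolmogorovDensity_le hσ.ne' hμ.ne' hT q₀
  have h_int := integrableOn_Icc_abs_sub_rpow (r := -(4 : ℝ) / 5) (by norm_num) q₀
  obtain ⟨B, hB, h_space⟩ := exists_setIntegral_Icc_le_mul (fun x => by positivity)
    (h_int _ _) (by positivity : 0 < |q₀| / 2) (by positivity)
    fun x hx => rpow_abs_sub_le_of_abs_le hq₀ (by norm_num) (abs_le.mpr hx)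
  refine ⟨C * B, by positivity, fun δ ⟨hδ₀, hδ₁⟩ => ?_⟩
  calc _ ≤ (∫ x in Icc (-(δ ^ 2) / 2) (δ ^ 2 / 2), C * |x - q₀| ^ (-(4 : ℝ) / 5)) *
          volume.real (Icc (-δ / 2) (δ / 2)) :=
        setIntegral_prod_le_of_ae_le_comp_fst
          (fun y => intervalIntegral.integral_nonneg hT.le fun _ _ =>
            kolmogorovDensity_nonneg ..)
          ((h_int _ _).const_mul C) measure_Icc_lt_top.ne
          (by filter_upwards [Measure.ae_ne volume q₀] with x hx y using h_time (x, y) hx)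
    _ = C * (∫ x in Icc (-(δ ^ 2) / 2) (δ ^ 2 / 2), |x - q₀| ^ (-(4 : ℝ) / 5)) * δ := by
        rw [integral_const_mul, Real.volume_real_Icc_of_le (by linarith)]
        ring
    _ ≤ C * (B * δ ^ 2) * δ := by
        gcongr
        exact h_space _ ⟨by positivity, by nlinarith⟩
    _ = C * B * δ ^ 3 := by ring
end
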